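/- arXiv:math/9807118 — 2 statements merged into one kernel-verified Lean document; each statement's English description precedes it below -/
import Mathlib

section
/- Let 𝒩 and 𝒬 be nontrivial varieties of groups and 𝒱 = 𝒩𝒬. Let G ∈ 𝒱, H a subgroup of G, N = 𝒬(G) the verbal subgroup of G associated to 𝒬, and D = dom_N^𝒩(N ∩ H), regarded as a subgroup of G. If N_G(D)·N = G (where N_G(D) is the normalizer of D in G), then dom_G^{𝒩𝒬}(H) = HD. -/
/-- A bundled group: a type in universe `u` together with a group structure. -/
structure GroupT : Type (u + 1) where
  carrier : Type u
  [str : Group carrier]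

attribute [instance] GroupT.str

/-- A variety of groups: a class of groups closed under isomorphism, subgroups,
homomorphic images, and arbitrary direct products indexed by types in the universe. -/
structure GroupVariety : Type (u + 1) where
  Mem : GroupT.{u} → Prop
  iso_closed : ∀ {G H : GroupT.{u}}, G.carrier ≃* H.carrier → Mem G → Mem H
  subgroup_closed : ∀ (G : GroupT.{u}) (H : Subgroup G.carrier), Mem G → Mem ⟨H⟩
  quotient_closed : ∀ (G H : GroupT.{u}) (f : G.carrier →* H.carrier),
      Function.Surjective f → Mem G → Mem H
  pi_closed : ∀ (ι : Type u) (f : ι → GroupT.{u}),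
      (∀ i, Mem (f i)) → Mem ⟨∀ i, (f i).carrier⟩

/-- A variety is nontrivial if it contains some nontrivial group and
does not contain all groups. -/
def GroupVariety.IsNontrivial (V : GroupVariety.{u}) : Prop :=
  (∃ G : GroupT.{u}, V.Mem G ∧ Nontrivial G.carrier) ∧ ∃ G : GroupT.{u}, ¬ V.Mem G

/-- The dominion of a subgroup `H` of `G` relative to a class `C` of groups:
all elements of `G` on which any two homomorphisms into a `C`-group agreeing on `H`
must agree. -/
def dominion (C : GroupT.{u} → Prop) (G : Type u) [Group G] (H : Subgroup G) : Set G :=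
  {a | ∀ K : GroupT.{u}, C K → ∀ f g : G →* K.carrier, (∀ h ∈ H, f h = g h) → f a = g a}

/-- The product variety `𝒩𝒬`: the class of groups having a normal subgroup in `𝒩`
with quotient in `𝒬`. -/
def ProductVariety (N Q : GroupVariety.{u}) (G : GroupT.{u}) : Prop :=
  ∃ (M : Subgroup G.carrier) (h : M.Normal),
    N.Mem ⟨M⟩ ∧ (letI := h; Q.Mem ⟨G.carrier ⧸ M⟩)

/-- The verbal subgroup `𝒬(G)`: the intersection of all normal subgroups of `G`
whose quotient lies in `𝒬`. -/
def verbalSubgroup (Q : GroupVariety.{u}) (G : Type u) [Group G] : Subgroup G :=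
  ⨅ M ∈ {M : Subgroup G | ∃ h : M.Normal, (letI := h; Q.Mem ⟨G ⧸ M⟩)}, M

open scoped Pointwise


/-!
Everything goes through the regular wreath product `K ≀ᵣ (G ⧸ N)`, which lies in `𝒩𝒬` whenever
`K ∈ 𝒩`, since `G ⧸ N ∈ 𝒬`.

`HD ⊆ dom`: a homomorphism from `G` to a group of `𝒩𝒬` maps `N = 𝒬(G)` into the `𝒩`-part.

`dom ⊆ HD`: conjugating `G → A ≀ᵣ (G ⧸ N)` (with `A ∈ 𝒩` nontrivial) by the base element that
is the indicator function of the image of `H` shows that the dominion lies in `HN`. For `n ∈ N` in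
the dominion and `f, g : N → K ∈ 𝒩`, the Kaloujnine–Krasner embeddings built from `f`, `g` and a
transversal `σ` agree on `H` as soon as `f` and `g` agree on all `σ(p)⁻¹ h σ(h̄⁻¹ p)`, and then
`f n = g n`. Since `N_G(D) N = G`, `σ` can be chosen so that these elements are `N_G(D)`-conjugates
of elements of `H ∩ N`, hence lie in `D`.
-/

universe u

namespace RegularWreathProduct

variable {D Q : Type*} [Group D] [Group Q]

def ofBase : (Q → D) →* D ≀ᵣ Q where
  toFun t := ⟨t, 1⟩
  map_one' := rfl
  map_mul' s t := by ext <;> simp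

@[simp] lemma left_ofBase (t : Q → D) : (ofBase t : D ≀ᵣ Q).left = t := rfl

@[simp] lemma right_ofBase (t : Q → D) : (ofBase t : D ≀ᵣ Q).right = 1 := rfl

lemma rightHom_surjective : Function.Surjective (rightHom : D ≀ᵣ Q →* Q) :=
  fun q => ⟨inl q, rfl⟩

lemma range_ofBase : (ofBase : (Q → D) →* D ≀ᵣ Q).range = rightHom.ker := by
  ext ⟨t, q⟩
  simp only [MonoidHom.mem_range, MonoidHom.mem_ker, rightHom_eq_right]
  constructor
  · rintro ⟨t, ht⟩
    exact (congrArg RegularWreathProduct.right ht).symm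
  · rintro (rfl : q = 1)
    exact ⟨t, rfl⟩

lemma commute_ofBase_inl_iff (t : Q → D) (q : Q) :
    Commute (ofBase t : D ≀ᵣ Q) (inl q) ↔ ∀ x, t (q * x) = t x := by
  rw [Commute, SemiconjBy, RegularWreathProduct.ext_iff]
  simp only [mul_left, mul_right, left_ofBase, right_ofBase, left_inl, right_inl, one_mul,
    mul_one, inv_one]
  constructor
  · rintro ⟨h, -⟩ x
    simpa using congrFun h (q * x)
  · intro h
    refine ⟨funext fun x => ?_, trivial⟩
    simpa using h (q⁻¹ * x)

end RegularWreathProduct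

open RegularWreathProduct

lemma GroupVariety.mem_quotient_ker (𝒬 : GroupVariety.{u}) {G K : Type u} [Group G] [Group K]
    (φ : G →* K) (hK : 𝒬.Mem ⟨K⟩) : 𝒬.Mem ⟨G ⧸ φ.ker⟩ :=
  𝒬.iso_closed (QuotientGroup.quotientKerEquivRange φ).symm (𝒬.subgroup_closed ⟨K⟩ φ.range hK)

lemma productVariety_regularWreathProduct (𝒩 𝒬 : GroupVariety.{u}) {D Q : Type u}
    [Group D] [Group Q] (hD : 𝒩.Mem ⟨D⟩) (hQ : 𝒬.Mem ⟨Q⟩) :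
    ProductVariety 𝒩 𝒬 ⟨D ≀ᵣ Q⟩ := by
  refine ⟨rightHom.ker, inferInstance, ?_, ?_⟩
  · have hbase : 𝒩.Mem ⟨Q → D⟩ := 𝒩.pi_closed Q (fun _ => ⟨D⟩) (fun _ => hD)
    exact 𝒩.iso_closed ((MonoidHom.ofInjective (f := ofBase) fun s t h =>
      congrArg RegularWreathProduct.left h).trans (MulEquiv.subgroupCongr range_ofBase)) hbase
  · exact 𝒬.iso_closed (QuotientGroup.quotientKerEquivOfSurjective _ rightHom_surjective).symm hQ

section Verbal

variable (𝒬 : GroupVariety.{u}) (G : Type u) [Group G]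

instance verbalSubgroup_normal : (verbalSubgroup 𝒬 G).Normal where
  conj_mem n hn g := by
    simp only [verbalSubgroup, Subgroup.mem_iInf] at hn ⊢
    exact fun M hM => hM.choose.conj_mem n (hn M hM) g

variable {𝒬 G}

lemma verbalSubgroup_le_ker {K : Type u} [Group K] (φ : G →* K) (hK : 𝒬.Mem ⟨K⟩) :
    verbalSubgroup 𝒬 G ≤ φ.ker :=
  biInf_le _ ⟨inferInstance, 𝒬.mem_quotient_ker φ hK⟩

variable (𝒬 G)

lemma mem_quotient_verbalSubgroup : 𝒬.Mem ⟨G ⧸ verbalSubgroup 𝒬 G⟩ := by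
  let S := {M : Subgroup G // ∃ h : M.Normal, letI := h; 𝒬.Mem ⟨G ⧸ M⟩}
  let _ (M : S) : M.1.Normal := M.2.choose
  let Φ : G →* ∀ M : S, G ⧸ M.1 := MonoidHom.pi fun M => QuotientGroup.mk' M.1
  have hker : Φ.ker = verbalSubgroup 𝒬 G := by
    ext x
    simp [Φ, verbalSubgroup, funext_iff, S]
  have hΦ : 𝒬.Mem ⟨∀ M : S, G ⧸ M.1⟩ :=
    𝒬.pi_closed S (fun M => ⟨G ⧸ M.1⟩) fun M => M.2.choose_spec
  exact 𝒬.iso_closed (QuotientGroup.quotientMulEquivOfEq hker) (𝒬.mem_quotient_ker Φ hΦ)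

end Verbal

section Dominion

variable (C : GroupT.{u} → Prop) {G : Type u} [Group G]

def dominionSubgroup (H : Subgroup G) : Subgroup G where
  carrier := dominion C G H
  one_mem' _ _ f g _ := by rw [map_one, map_one]
  mul_mem' ha hb K hK f g hfg := by rw [map_mul, map_mul, ha K hK f g hfg, hb K hK f g hfg]
  inv_mem' ha K hK f g hfg := by rw [map_inv, map_inv, ha K hK f g hfg]

lemma le_dominionSubgroup (H : Subgroup G) : H ≤ dominionSubgroup C H :=
  fun h hh _ _ _ _ hfg => hfg h hh

variable {C}

lemma mem_map_of_mem_dominion {Q A : Type u} [Group Q] [Group A] [Nontrivial A]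
    (hA : C ⟨A ≀ᵣ Q⟩) (π : G →* Q) {H : Subgroup G} {a : G} (ha : a ∈ dominion C G H) :
    π a ∈ H.map π := by
  classical
  obtain ⟨a₀, ha₀⟩ := exists_ne (1 : A)
  let H' := H.map π
  let t : Q → A := fun q => if q ∈ H' then a₀ else 1
  have ht : ∀ q ∈ H', ∀ x, t (q * x) = t x := fun q hq x => by
    simp only [t, Subgroup.mul_mem_cancel_left H' hq]
  let f : G →* A ≀ᵣ Q := inl.comp π
  have hfix : ∀ x, t (π a * x) = t x := by
    rw [← commute_ofBase_inl_iff]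
    have hfa := ha ⟨A ≀ᵣ Q⟩ hA f ((MulAut.conj (ofBase t)).toMonoidHom.comp f) fun h hh =>
      eq_mul_inv_iff_mul_eq.2 ((commute_ofBase_inl_iff t (π h)).2 (ht _ ⟨h, hh, rfl⟩)).eq.symm
    exact mul_inv_eq_iff_eq_mul.1 hfa.symm
  change π a ∈ H'
  by_contra hnot
  have h1 := hfix 1
  simp only [mul_one, t, if_neg hnot, if_pos (one_mem H')] at h1
  exact ha₀ h1.symm

end Dominion

lemma coe_mem_dominion_productVariety {𝒩 𝒬 : GroupVariety.{u}} {G : Type u} [Group G]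
    {N : Subgroup G} (hN : N ≤ verbalSubgroup 𝒬 G) {H : Subgroup G} {n : N}
    (hn : n ∈ dominion 𝒩.Mem N (H.subgroupOf N)) :
    (n : G) ∈ dominion (ProductVariety 𝒩 𝒬) G H := by
  rintro K ⟨M, hM, hM𝒩, hM𝒬⟩ f g hfg
  have hle (φ : G →* K.carrier) : N ≤ M.comap φ := by
    refine hN.trans ((verbalSubgroup_le_ker ((QuotientGroup.mk' M).comp φ) hM𝒬).trans_eq ?_)
    rw [← MonoidHom.comap_ker, QuotientGroup.ker_mk']
  let res (φ : G →* K.carrier) : N →* M := (φ.comp N.subtype).codRestrict M fun x => hle φ x.2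
  exact congrArg Subtype.val (hn ⟨M⟩ hM𝒩 (res f) (res g) fun x hx => Subtype.ext (hfg x hx))

section KaloujnineKrasner

variable {G : Type u} [Group G] (N : Subgroup G) [N.Normal]
  {σ : G ⧸ N → G} (hσ : ∀ p, (σ p : G ⧸ N) = p)

def kkCocycle (p : G ⧸ N) (x : G) : N :=
  ⟨(σ p)⁻¹ * x * σ ((x : G ⧸ N)⁻¹ * p), by
    rw [← QuotientGroup.eq_one_iff]
    simp only [QuotientGroup.mk_mul, QuotientGroup.mk_inv, hσ]
    group⟩

lemma coe_kkCocycle (p : G ⧸ N) (x : G) :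
    (kkCocycle N hσ p x : G) = (σ p)⁻¹ * x * σ ((x : G ⧸ N)⁻¹ * p) := rfl

lemma kkCocycle_one (p : G ⧸ N) : kkCocycle N hσ p 1 = 1 := by
  ext
  simp [coe_kkCocycle]

lemma kkCocycle_mul (p : G ⧸ N) (x y : G) :
    kkCocycle N hσ p (x * y) = kkCocycle N hσ p x * kkCocycle N hσ ((x : G ⧸ N)⁻¹ * p) y := by
  ext
  simp only [Subgroup.coe_mul, coe_kkCocycle, QuotientGroup.mk_mul, mul_inv_rev, mul_assoc,
    mul_inv_cancel_left]

lemma kkCocycle_one_of_mem (hσ1 : σ 1 = 1) {n : G} (hn : n ∈ N) :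
    kkCocycle N hσ 1 n = ⟨n, hn⟩ := by
  ext
  rw [coe_kkCocycle, (QuotientGroup.eq_one_iff n).2 hn, inv_one, mul_one, hσ1, inv_one, one_mul,
    mul_one]

/-- The Kaloujnine–Krasner embedding of `G` into the wreath product of `N` by `G ⧸ N`,
composed with `f` on the base. -/
def kkHom {K : Type u} [Group K] (f : N →* K) : G →* K ≀ᵣ (G ⧸ N) where
  toFun x := ⟨fun p => f (kkCocycle N hσ p x), x⟩
  map_one' := by
    ext p
    · simp [kkCocycle_one]
    · rfl
  map_mul' x y := by
    ext p
    · simp [kkCocycle_mul]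
    · rfl

theorem mem_dominion_subgroupOf_of_mem_dominion {C C' : GroupT.{u} → Prop}
    (hC : ∀ K : GroupT.{u}, C' K → C ⟨K.carrier ≀ᵣ (G ⧸ N)⟩) {H : Subgroup G} (hσ1 : σ 1 = 1)
    (hσH : ∀ p, ∀ h ∈ H, kkCocycle N hσ p h ∈ dominion C' N (H.subgroupOf N))
    {n : G} (hn : n ∈ N) (ha : n ∈ dominion C G H) :
    ⟨n, hn⟩ ∈ dominion C' N (H.subgroupOf N) := by
  intro K hK f g hfg
  have hkk : kkHom N hσ f n = kkHom N hσ g n :=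
    ha _ (hC K hK) _ _ fun h hh =>
      RegularWreathProduct.ext (funext fun p => hσH p h hh K hK f g hfg) rfl
  simpa [kkHom, kkCocycle_one_of_mem N hσ hσ1 hn] using
    congrFun (congrArg RegularWreathProduct.left hkk) 1

end KaloujnineKrasner

lemma exists_forall_apply_and_apply_eq {α β : Type*} {P : α → β → Prop} (h : ∀ a, ∃ b, P a b)
    {a₀ : α} {b₀ : β} (h₀ : P a₀ b₀) : ∃ s : α → β, (∀ a, P a (s a)) ∧ s a₀ = b₀ := by
  classical
  choose s hs using h
  refine ⟨Function.update s a₀ b₀, fun a => ?_, Function.update_self ..⟩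
  by_cases ha : a = a₀
  · subst ha; simpa using h₀
  · simpa [ha] using hs a

/-- Write `σ = τ * ρ` with `ρ ∈ R` constant on the right cosets of the image of `H`, and
`τ ∈ H`: then `σ`-conjugates of elements of `H` are `R`-conjugates of elements of `H ⊓ N`. -/
theorem exists_transversal_conj_mem {G : Type*} [Group G] (N : Subgroup G) [N.Normal]
    (H R : Subgroup G) (hR : ∀ q : G ⧸ N, ∃ r ∈ R, (r : G ⧸ N) = q) :
    ∃ σ : G ⧸ N → G, (∀ p, (σ p : G ⧸ N) = p) ∧ σ 1 = 1 ∧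
      ∀ p, ∀ h ∈ H, ∃ r ∈ R, ∃ w ∈ H ⊓ N,
        (σ p)⁻¹ * h * σ ((h : G ⧸ N)⁻¹ * p) = r⁻¹ * w * r := by
  let H' := H.map (QuotientGroup.mk' N)
  let O := Quotient (QuotientGroup.rightRel H')
  obtain ⟨ρ₀, hρ₀, hρ₀1⟩ : ∃ ρ₀ : O → G, (∀ o, ρ₀ o ∈ R ∧ (⟦(ρ₀ o : G ⧸ N)⟧ : O) = o) ∧
      ρ₀ ⟦1⟧ = 1 := by
    refine exists_forall_apply_and_apply_eq
      (P := fun o r => r ∈ R ∧ (⟦(r : G ⧸ N)⟧ : O) = o) (fun o => ?_) ⟨one_mem R, rfl⟩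
    induction o using Quotient.ind with
    | _ q => obtain ⟨r, hr, rfl⟩ := hR q; exact ⟨r, hr, rfl⟩
  let ρ (p : G ⧸ N) : G := ρ₀ ⟦p⟧
  have hρH' (p : G ⧸ N) : p * (ρ p : G ⧸ N)⁻¹ ∈ H' :=
    QuotientGroup.rightRel_apply.1 (Quotient.exact (hρ₀ ⟦p⟧).2)
  obtain ⟨τ, hτ, hτ1⟩ : ∃ τ : G ⧸ N → G,
      (∀ p, τ p ∈ H ∧ (τ p : G ⧸ N) = p * (ρ p : G ⧸ N)⁻¹) ∧ τ 1 = 1 := by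
    refine exists_forall_apply_and_apply_eq
      (P := fun p h => h ∈ H ∧ (h : G ⧸ N) = p * (ρ p : G ⧸ N)⁻¹) hρH' ⟨one_mem H, ?_⟩
    simp [ρ, hρ₀1]
  have hρ_mul (p : G ⧸ N) {h : G} (hh : h ∈ H) : ρ ((h : G ⧸ N)⁻¹ * p) = ρ p :=
    congrArg ρ₀ <| Quotient.sound <| QuotientGroup.rightRel_apply.2 <| by
      rw [mul_inv_rev, inv_inv, mul_inv_cancel_left]
      exact Subgroup.mem_map_of_mem (QuotientGroup.mk' N) hh
  refine ⟨fun p => τ p * ρ p, fun p => by simp [(hτ p).2], by simp [ρ, hρ₀1, hτ1],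
    fun p h hh => ⟨ρ p, (hρ₀ _).1, (τ p)⁻¹ * h * τ ((h : G ⧸ N)⁻¹ * p),
      Subgroup.mem_inf.2 ⟨?_, ?_⟩, ?_⟩⟩
  · exact mul_mem (mul_mem (inv_mem (hτ p).1) hh) (hτ _).1
  · rw [← QuotientGroup.eq_one_iff]
    simp only [QuotientGroup.mk_mul, QuotientGroup.mk_inv, (hτ _).2, hρ_mul p hh]
    group
  · simp only [hρ_mul p hh]
    group

lemma mem_dominion_subgroupOf_of_coe_eq_conj {C : GroupT.{u} → Prop} {G : Type u} [Group G]
    {N H : Subgroup G} {r w : G}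
    (hr : r ∈ Subgroup.normalizer (Subtype.val '' dominion C N (H.subgroupOf N)))
    (hw : w ∈ H ⊓ N) {x : N} (hx : (x : G) = r⁻¹ * w * r) :
    x ∈ dominion C N (H.subgroupOf N) := by
  have hwD : ((⟨w, hw.2⟩ : N) : G) ∈ Subtype.val '' dominion C N (H.subgroupOf N) :=
    Set.mem_image_of_mem _ (le_dominionSubgroup C _ (Subgroup.mem_subgroupOf.2 hw.1))
  rw [← Subtype.val_injective.mem_set_image, hx]
  exact (Subgroup.mem_set_normalizer_iff''.1 hr w).1 hwD

theorem stmt5_general (𝒩 𝒬 : GroupVariety.{u}) (h𝒩 : 𝒩.IsNontrivial)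
    (G : Type u) [Group G] (H : Subgroup G)
    (N : Subgroup G) (hN : N = verbalSubgroup 𝒬 G)
    (D : Set G) (hD : D = Subtype.val '' dominion 𝒩.Mem (↥N) (H.subgroupOf N))
    (hnorm : (Subgroup.setNormalizer D : Set G) * (N : Set G) = Set.univ) :
    dominion (ProductVariety 𝒩 𝒬) G H = (H : Set G) * D := by
  subst hN hD
  set N := verbalSubgroup 𝒬 G
  obtain ⟨⟨A, hA, _⟩, -⟩ := h𝒩
  have hW (K : GroupT.{u}) (hK : 𝒩.Mem K) : ProductVariety 𝒩 𝒬 ⟨K.carrier ≀ᵣ (G ⧸ N)⟩ :=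
    productVariety_regularWreathProduct 𝒩 𝒬 hK (mem_quotient_verbalSubgroup 𝒬 G)
  obtain ⟨σ, hσ, hσ1, hσH⟩ := exists_transversal_conj_mem N H _ fun q => by
    induction q using QuotientGroup.induction_on with
    | H g =>
      obtain ⟨r, hr, m, hm, rfl⟩ := Set.mem_mul.1 (hnorm.symm ▸ Set.mem_univ g)
      exact ⟨r, hr, by simpa using hm⟩
  ext a
  constructor
  · intro ha
    obtain ⟨h, hh, hha⟩ := mem_map_of_mem_dominion (hW A hA) (QuotientGroup.mk' N) ha
    have hn : h⁻¹ * a ∈ N := QuotientGroup.eq.1 hha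
    have hdom : h⁻¹ * a ∈ dominionSubgroup _ H :=
      mul_mem (inv_mem (le_dominionSubgroup _ H hh)) ha
    refine ⟨h, hh, h⁻¹ * a, ⟨⟨_, hn⟩, ?_, rfl⟩, mul_inv_cancel_left h a⟩
    refine mem_dominion_subgroupOf_of_mem_dominion N hσ hW hσ1 (fun p k hk => ?_) hn hdom
    obtain ⟨r, hr, w, hw, hconj⟩ := hσH p k hk
    exact mem_dominion_subgroupOf_of_coe_eq_conj hr hw hconj
  · rintro ⟨h, hh, _, ⟨d, hd, rfl⟩, rfl⟩
    exact mul_mem (le_dominionSubgroup _ H hh) (coe_mem_dominion_productVariety le_rfl hd)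

theorem stmt5 (𝒩 𝒬 : GroupVariety.{u}) (h𝒩 : 𝒩.IsNontrivial) (h𝒬 : 𝒬.IsNontrivial)
    (G : Type u) [Group G] (hG : ProductVariety 𝒩 𝒬 ⟨G⟩) (H : Subgroup G)
    (N : Subgroup G) (hN : N = verbalSubgroup 𝒬 G)
    (D : Set G) (hD : D = Subtype.val '' dominion 𝒩.Mem (↥N) (H.subgroupOf N))
    (hnorm : (Subgroup.setNormalizer D : Set G) * (N : Set G) = Set.univ) :
    dominion (ProductVariety 𝒩 𝒬) G H = (H : Set G) * D :=
  stmt5_general 𝒩 𝒬 h𝒩 G H N hN D hD hnorm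
end

section
/- Let 𝒩 and 𝒬 be nontrivial varieties of groups and 𝒱 = 𝒩𝒬. Let G ∈ 𝒱, H a subgroup of G, N = 𝒬(G) the verbal subgroup of G associated to 𝒬, and let D' be the normal closure of H ∩ N in G. Then ⟨H, dom_N^𝒩(H ∩ N)⟩ ⊆ dom_G^{𝒩𝒬}(H) ⊆ ⟨H, D'⟩, where dom_N^𝒩(H ∩ N) is the dominion of H ∩ N in N in the variety 𝒩, regarded as a subgroup of G. -/
/-! ### Auxiliary lemmas about the verbal subgroup -/

theorem verbal_normal (Q : GroupVariety.{u}) (G : Type u) [Group G] :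
    (verbalSubgroup Q G).Normal := by
  constructor
  intro n hn g
  simp only [verbalSubgroup, Subgroup.mem_iInf] at hn ⊢
  intro M hM
  exact hM.choose.conj_mem n (hn M hM) g

theorem verbal_le {Q : GroupVariety.{u}} {G : Type u} [Group G] {M : Subgroup G}
    (h : M.Normal) (hQ : (letI := h; Q.Mem ⟨G ⧸ M⟩)) : verbalSubgroup Q G ≤ M :=
  biInf_le _ ⟨h, hQ⟩

def QSet (Q : GroupVariety.{u}) (G : Type u) [Group G] : Set (Subgroup G) :=
  {M : Subgroup G | ∃ h : M.Normal, (letI := h; Q.Mem ⟨G ⧸ M⟩)}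

instance QSet_normal {Q : GroupVariety.{u}} {G : Type u} [Group G]
    (i : {M : Subgroup G // M ∈ QSet Q G}) : i.1.Normal := i.2.choose

def QFam (Q : GroupVariety.{u}) (G : Type u) [Group G] :
    {M : Subgroup G // M ∈ QSet Q G} → GroupT.{u} :=
  fun i => ⟨G ⧸ i.1⟩

theorem QFam_mem (Q : GroupVariety.{u}) (G : Type u) [Group G]
    (i : {M : Subgroup G // M ∈ QSet Q G}) : Q.Mem (QFam Q G i) := i.2.choose_spec

def QHom (Q : GroupVariety.{u}) (G : Type u) [Group G] :
    G →* ∀ i, (QFam Q G i).carrier where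
  toFun x i := QuotientGroup.mk x
  map_one' := by funext i; rfl
  map_mul' x y := by funext i; rfl

theorem QHom_ker (Q : GroupVariety.{u}) (G : Type u) [Group G] :
    (QHom Q G).ker = verbalSubgroup Q G := by
  ext x
  simp only [MonoidHom.mem_ker, QHom, MonoidHom.coe_mk, OneHom.coe_mk, funext_iff,
    verbalSubgroup, Subgroup.mem_iInf]
  constructor
  · intro hx M hM
    haveI := hM.choose
    exact (QuotientGroup.eq_one_iff (N := M) x).mp (hx ⟨M, hM⟩)
  · intro hx i
    exact (QuotientGroup.eq_one_iff (N := i.1) x).mpr (hx i.1 i.2)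

theorem quot_verbal_mem (Q : GroupVariety.{u}) (G : Type u) [Group G]
    (N : Subgroup G) [hn : N.Normal] (h : N = verbalSubgroup Q G) :
    Q.Mem ⟨G ⧸ N⟩ := by
  have h1 : Q.Mem ⟨∀ i, (QFam Q G i).carrier⟩ := Q.pi_closed _ (QFam Q G) (QFam_mem Q G)
  have h2 : Q.Mem ⟨(QHom Q G).range⟩ := Q.subgroup_closed _ _ h1
  have hker : (QHom Q G).ker = N := by rw [QHom_ker, h]
  have e : (↥(QHom Q G).range) ≃* (G ⧸ N) :=
    ((QuotientGroup.quotientMulEquivOfEq hker.symm).trans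
      (QuotientGroup.quotientKerEquivRange (QHom Q G))).symm
  exact Q.iso_closed e h2

/-! ### Semidirect products with a group of functions -/

section
variable (A Q : Type u) [Group A] [Group Q]

/-- Right-translation action of `Q` on `Q → A`. -/
def transAut : Q →* MulAut (Q → A) where
  toFun p :=
    { toFun := fun m q => m (q * p)
      invFun := fun m q => m (q * p⁻¹)
      left_inv := fun m => funext fun q => by simp
      right_inv := fun m => funext fun q => by simp
      map_mul' := fun m₁ m₂ => rfl }
  map_one' := by
    apply MulEquiv.ext; intro m; funext q; simp
  map_mul' p₁ p₂ := by
    apply MulEquiv.ext; intro m; funext q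
    show m (q * (p₁ * p₂)) = m (q * p₁ * p₂)
    rw [mul_assoc]

variable {A Q}

/-- A homomorphism into the semidirect product built from a cocycle. -/
def cocycleHom {G : Type u} [Group G] (π : G →* Q) (δ : G → (Q → A))
    (hc : ∀ x y q, δ (x * y) q = δ x q * δ y (q * π x)) :
    G →* SemidirectProduct (Q → A) Q (transAut A Q) where
  toFun x := ⟨δ x, π x⟩
  map_one' := by
    have h1 : ∀ q, δ 1 q = 1 := by
      intro q
      have := hc 1 1 q
      rw [one_mul, map_one, mul_one] at this
      exact (left_eq_mul.mp this)
    have h2 : δ 1 = 1 := funext h1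
    simp only [h2, map_one]
    rfl
  map_mul' x y := by
    have hl : δ (x * y) = δ x * transAut A Q (π x) (δ y) := by
      funext q; exact hc x y q
    show (⟨δ (x*y), π (x*y)⟩ : SemidirectProduct (Q → A) Q (transAut A Q)) = _
    rw [hl, map_mul]
    rfl

@[simp] theorem cocycleHom_left {G : Type u} [Group G] (π : G →* Q) (δ : G → (Q → A))
    (hc : ∀ x y q, δ (x * y) q = δ x q * δ y (q * π x)) (x : G) :
    (cocycleHom π δ hc x).left = δ x := rfl

theorem sdp_mem (𝒩 𝒬 : GroupVariety.{u}) (A Q : Type u) [Group A] [Group Q]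
    (hA : 𝒩.Mem ⟨A⟩) (hQ : 𝒬.Mem ⟨Q⟩) :
    ProductVariety 𝒩 𝒬 ⟨SemidirectProduct (Q → A) Q (transAut A Q)⟩ := by
  refine ⟨SemidirectProduct.rightHom.ker, inferInstance, ?_, ?_⟩
  · have h1 : 𝒩.Mem ⟨∀ _ : Q, A⟩ := 𝒩.pi_closed Q (fun _ => ⟨A⟩) (fun _ => hA)
    have e : (Q → A) ≃* ((SemidirectProduct.rightHom :
        SemidirectProduct (Q → A) Q (transAut A Q) →* Q).ker) :=
      (MonoidHom.ofInjective SemidirectProduct.inl_injective).trans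
        (MulEquiv.subgroupCongr SemidirectProduct.range_inl_eq_ker_rightHom)
    exact 𝒩.iso_closed e h1
  · exact 𝒬.iso_closed
      (QuotientGroup.quotientKerEquivOfSurjective _
        SemidirectProduct.rightHom_surjective).symm hQ

end

open scoped Pointwise in
theorem stmt7 (𝒩 𝒬 : GroupVariety.{u}) (h𝒩 : 𝒩.IsNontrivial) (h𝒬 : 𝒬.IsNontrivial)
    (G : Type u) [Group G] (hG : ProductVariety 𝒩 𝒬 ⟨G⟩) (H : Subgroup G)
    (N : Subgroup G) (hN : N = verbalSubgroup 𝒬 G)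
    (D : Set G) (hD : D = Subtype.val '' dominion 𝒩.Mem (↥N) (H.subgroupOf N))
    (D' : Subgroup G) (hD' : D' = Subgroup.normalClosure ((H ⊓ N : Subgroup G) : Set G)) :
    (Subgroup.closure ((H : Set G) ∪ D) : Set G) ⊆ dominion (ProductVariety 𝒩 𝒬) G H ∧
      dominion (ProductVariety 𝒩 𝒬) G H ⊆
        (Subgroup.closure ((H : Set G) ∪ (D' : Set G)) : Set G) := by
  classical
  haveI hNnorm : N.Normal := hN ▸ verbal_normal 𝒬 G
  set π := QuotientGroup.mk' N with hπ
  have hmemN : ∀ z : G, π z = 1 → z ∈ N := by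
    intro z hz
    rwa [← QuotientGroup.ker_mk' N, MonoidHom.mem_ker]
  have hπmem : ∀ z : G, z ∈ N → π z = 1 := by
    intro z hz
    rw [hπ, QuotientGroup.mk'_apply, QuotientGroup.eq_one_iff]; exact hz
  constructor
  · -- first inclusion
    have hsub : (H : Set G) ∪ D ⊆ dominion (ProductVariety 𝒩 𝒬) G H := by
      rintro a (ha | ha)
      · exact fun K hK f g hfg => hfg a ha
      · rw [hD] at ha
        obtain ⟨a', ha', rfl⟩ := ha
        rintro K ⟨M, hMnorm, hMN, hMQ⟩ f g hfg
        haveI := hMnorm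
        have hmem : ∀ (φ : G →* K.carrier), ∀ n : G, n ∈ N → φ n ∈ M := by
          intro φ n hn
          have key : N ≤ ((QuotientGroup.mk' M).comp φ).ker := by
            rw [hN]
            refine verbal_le inferInstance ?_
            exact 𝒬.iso_closed (QuotientGroup.quotientKerEquivRange _).symm
              (𝒬.subgroup_closed ⟨K.carrier ⧸ M⟩ _ hMQ)
          have := key hn
          rw [MonoidHom.mem_ker, MonoidHom.comp_apply] at this
          rwa [← QuotientGroup.ker_mk' M, MonoidHom.mem_ker]
        have hres := ha' ⟨↥M⟩ hMN
          ((f.comp N.subtype).codRestrict M (fun n => hmem f n n.2))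
          ((g.comp N.subtype).codRestrict M (fun n => hmem g n n.2))
          (fun h hh => Subtype.ext (hfg ↑h (Subgroup.mem_subgroupOf.mp hh)))
        exact congrArg Subtype.val hres
    intro a ha
    let Dom : Subgroup G :=
      { carrier := dominion (ProductVariety 𝒩 𝒬) G H
        one_mem' := fun K hK f g hfg => by rw [map_one, map_one]
        mul_mem' := fun {x y} hx hy K hK f g hfg => by
          rw [map_mul, map_mul, hx K hK f g hfg, hy K hK f g hfg]
        inv_mem' := fun {x} hx K hK f g hfg => by
          rw [map_inv, map_inv, hx K hK f g hfg] }
    exact (Subgroup.closure_le Dom).2 hsub ha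
  · -- second inclusion
    intro a ha
    by_contra hcon
    haveI hRnorm : D'.Normal := hD' ▸ Subgroup.normalClosure_normal
    have hHNR : ∀ x, x ∈ H ⊓ N → x ∈ D' := by
      intro x hx
      rw [hD']
      exact Subgroup.subset_normalClosure hx
    rw [SetLike.mem_coe, Subgroup.closure_union, Subgroup.closure_eq, Subgroup.closure_eq]
      at hcon
    have hQmem : 𝒬.Mem ⟨G ⧸ N⟩ := quot_verbal_mem 𝒬 G N hN
    by_cases hAcase : a ∈ H ⊔ N
    · -- case B : a = h * n with n ∈ N \ D'
      have hamem : a ∈ (H : Set G) * (N : Set G) := by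
        rw [← Subgroup.mul_normal]; exact hAcase
      obtain ⟨h, hh, n, hn, rfl⟩ := hamem
      have hnR : n ∉ D' := by
        intro hmem
        exact hcon (Subgroup.mul_mem _ (Subgroup.mem_sup_left hh)
          (Subgroup.mem_sup_right hmem))
      haveI : (D'.subgroupOf N).Normal := hRnorm.subgroupOf N
      -- the transversal
      set r : (G ⧸ N) → (G ⧸ N) → Prop := fun q₁ q₂ => ∃ h₀, h₀ ∈ H ∧ q₁ * π h₀ = q₂ with hr
      have requiv : Equivalence r := by
        constructor
        · exact fun q => ⟨1, H.one_mem, by simp⟩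
        · rintro q₁ q₂ ⟨h₀, hh₀, he⟩
          exact ⟨h₀⁻¹, H.inv_mem hh₀, by rw [← he, map_inv, mul_assoc, mul_inv_cancel, mul_one]⟩
        · rintro q₁ q₂ q₃ ⟨h₀, hh₀, he⟩ ⟨h₁, hh₁, he'⟩
          exact ⟨h₀ * h₁, H.mul_mem hh₀ hh₁, by rw [← he', ← he, map_mul, mul_assoc]⟩
      set sd : Setoid (G ⧸ N) := ⟨r, requiv⟩ with hsd
      set rep : (G ⧸ N) → (G ⧸ N) := fun q => (Quotient.mk sd q).out with hrepdef
      have hrep : ∀ q, r (rep q) q := by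
        intro q
        exact Quotient.exact (Quotient.out_eq (Quotient.mk sd q))
      have hrepinv : ∀ (q : G ⧸ N) (h₀ : G), h₀ ∈ H → rep (q * π h₀) = rep q := by
        intro q h₀ hh₀
        have heq : Quotient.mk sd (q * π h₀) = Quotient.mk sd q :=
          (Quotient.sound (⟨h₀, hh₀, rfl⟩ : r q (q * π h₀))).symm
        show (Quotient.mk sd (q * π h₀)).out = (Quotient.mk sd q).out
        exact congrArg Quotient.out heq
      set hfun : (G ⧸ N) → G := fun q => (hrep q).choose with hhfun
      have hfunspec : ∀ q, hfun q ∈ H ∧ rep q * π (hfun q) = q := fun q => (hrep q).choose_spec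
      set t : (G ⧸ N) → G := fun q => (rep q).out * hfun q with ht
      have hπout : ∀ q : G ⧸ N, π q.out = q := fun q => QuotientGroup.out_eq' q
      have hπt : ∀ q, π (t q) = q := by
        intro q
        rw [ht]
        simp only [map_mul, hπout]
        exact (hfunspec q).2
      -- key property of the transversal
      have hkey : ∀ (q : G ⧸ N) (h₀ : G), h₀ ∈ H → (t (q * π h₀))⁻¹ * (t q * h₀) ∈ H ⊓ N := by
        intro q h₀ hh₀
        have e1 : (t (q * π h₀))⁻¹ * (t q * h₀)
            = (hfun (q * π h₀))⁻¹ * (hfun q * h₀) := by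
          rw [ht]
          simp only [hrepinv q h₀ hh₀]
          group
        rw [e1]
        constructor
        · exact H.mul_mem (H.inv_mem (hfunspec (q * π h₀)).1)
            (H.mul_mem (hfunspec q).1 hh₀)
        · apply hmemN
          have e2' : rep q * π (hfun (q * π h₀)) = q * π h₀ := by
            rw [← hrepinv q h₀ hh₀]; exact (hfunspec (q * π h₀)).2
          have e2 : π (hfun (q * π h₀)) = (rep q)⁻¹ * (q * π h₀) :=
            eq_inv_mul_of_mul_eq e2'
          have e3 : π (hfun q) = (rep q)⁻¹ * q :=
            eq_inv_mul_of_mul_eq (hfunspec q).2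
          rw [map_mul, map_inv, map_mul, e2, e3]
          group
      have hδR : ∀ (q : G ⧸ N) (h₀ : G), h₀ ∈ H → t q * h₀ * (t (q * π h₀))⁻¹ ∈ D' := by
        intro q h₀ hh₀
        have e1 : t q * h₀ * (t (q * π h₀))⁻¹
            = t (q * π h₀) * ((t (q * π h₀))⁻¹ * (t q * h₀)) * (t (q * π h₀))⁻¹ := by group
        rw [e1]
        exact hRnorm.conj_mem _ (hHNR _ (hkey q h₀ hh₀)) _
      -- the cocycle
      have hδmem : ∀ (x : G) (q : G ⧸ N), t q * x * (t (q * π x))⁻¹ ∈ N := by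
        intro x q
        apply hmemN
        simp only [map_mul, map_inv, hπt]
        group
      set δ : G → (G ⧸ N) → (↥N ⧸ D'.subgroupOf N) :=
        fun x q => QuotientGroup.mk (⟨t q * x * (t (q * π x))⁻¹, hδmem x q⟩ : ↥N) with hδ
      have hc : ∀ x y q, δ (x * y) q = δ x q * δ y (q * π x) := by
        intro x y q
        rw [hδ]
        show QuotientGroup.mk _ = QuotientGroup.mk _ * QuotientGroup.mk _
        rw [← QuotientGroup.mk_mul]
        apply congrArg
        apply Subtype.ext
        show t q * (x * y) * (t (q * π (x * y)))⁻¹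
          = (t q * x * (t (q * π x))⁻¹) * (t (q * π x) * y * (t (q * π x * π y))⁻¹)
        rw [map_mul, ← mul_assoc q (π x) (π y)]
        group
      -- membership of the semidirect product in the product variety
      obtain ⟨M₀, hM₀n, hM₀N, hM₀Q⟩ := hG
      have hNM₀ : N ≤ M₀ := by rw [hN]; exact verbal_le hM₀n hM₀Q
      have hNmem : 𝒩.Mem ⟨↥N⟩ :=
        𝒩.iso_closed (Subgroup.subgroupOfEquivOfLe hNM₀)
          (𝒩.subgroup_closed ⟨↥M₀⟩ (N.subgroupOf M₀) hM₀N)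
      have hNbmem : 𝒩.Mem ⟨↥N ⧸ D'.subgroupOf N⟩ :=
        𝒩.quotient_closed ⟨↥N⟩ _ (QuotientGroup.mk' (D'.subgroupOf N))
          (QuotientGroup.mk'_surjective _) hNmem
      have hKmem := sdp_mem 𝒩 𝒬 (↥N ⧸ D'.subgroupOf N) (G ⧸ N) hNbmem hQmem
      -- the two homomorphisms
      have hagree : ∀ h₀ ∈ H, cocycleHom π δ hc h₀
          = cocycleHom π (fun _ => 1) (by intro x y q; simp) h₀ := by
        intro h₀ hh₀
        apply SemidirectProduct.ext
        · show δ h₀ = 1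
          funext q
          show QuotientGroup.mk _ = 1
          rw [QuotientGroup.eq_one_iff]
          rw [Subgroup.mem_subgroupOf]
          exact hδR q h₀ hh₀
        · rfl
      have hfg := ha _ hKmem (cocycleHom π δ hc)
        (cocycleHom π (fun _ => 1) (by intro x y q; simp)) hagree
      have hleft : δ (h * n) = 1 := congrArg SemidirectProduct.left hfg
      have hone : δ (h * n) 1 = 1 := congrFun hleft 1
      have hone' : t 1 * (h * n) * (t (1 * π (h * n)))⁻¹ ∈ D' := by
        rw [hδ] at hone
        rw [QuotientGroup.eq_one_iff, Subgroup.mem_subgroupOf] at hone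
        exact hone
      have hπn : π n = 1 := hπmem n hn
      have hπhn : π (h * n) = π h := by rw [map_mul, hπn, mul_one]
      rw [hπhn] at hone'
      have hconj : t (1 * π h) * n * (t (1 * π h))⁻¹ ∈ D' := by
        have e1 : t (1 * π h) * n * (t (1 * π h))⁻¹
            = (t 1 * h * (t (1 * π h))⁻¹)⁻¹ * (t 1 * (h * n) * (t (1 * π h))⁻¹) := by group
        rw [e1]
        exact D'.mul_mem (D'.inv_mem (hδR 1 h hh)) hone'
      have : n ∈ D' := by
        have e2 : n = (t (1 * π h))⁻¹ * (t (1 * π h) * n * (t (1 * π h))⁻¹) * ((t (1 * π h))⁻¹)⁻¹ := by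
          group
        rw [e2]
        exact hRnorm.conj_mem _ hconj _
      exact hnR this
    · -- case A : a ∉ H ⊔ N
      obtain ⟨B, hB, hBnt⟩ := h𝒩.1
      obtain ⟨b, hb⟩ := exists_ne (1 : B.carrier)
      set Hb : Subgroup (G ⧸ N) := H.map π with hHb
      set e : (G ⧸ N) → ℤ := fun q => if q ∈ Hb then 1 else 0 with he
      set δ : G → (G ⧸ N) → B.carrier := fun x q => b ^ (e (q * π x) - e q) with hδ
      have hc : ∀ x y q, δ (x * y) q = δ x q * δ y (q * π x) := by
        intro x y q
        rw [hδ]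
        show b ^ (e (q * π (x * y)) - e q) = b ^ (e (q * π x) - e q) * b ^ (e (q * π x * π y) - e (q * π x))
        rw [← zpow_add, map_mul, ← mul_assoc q (π x) (π y)]
        ring_nf
      have hKmem := sdp_mem 𝒩 𝒬 B.carrier (G ⧸ N) hB hQmem
      have hagree : ∀ h₀ ∈ H, cocycleHom π δ hc h₀
          = cocycleHom π (fun _ => 1) (by intro x y q; simp) h₀ := by
        intro h₀ hh₀
        apply SemidirectProduct.ext
        · show δ h₀ = 1
          funext q
          show b ^ (e (q * π h₀) - e q) = 1
          have : e (q * π h₀) = e q := by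
            rw [he]
            have hmem : π h₀ ∈ Hb := ⟨h₀, hh₀, rfl⟩
            simp only [Subgroup.mul_mem_cancel_right _ hmem]
          rw [this, sub_self, zpow_zero]
        · rfl
      have hfg := ha _ hKmem (cocycleHom π δ hc)
        (cocycleHom π (fun _ => 1) (by intro x y q; simp)) hagree
      have hleft : δ a = 1 := congrArg SemidirectProduct.left hfg
      have hone : δ a ((π a)⁻¹) = 1 := congrFun hleft _
      have hπa : π a ∉ Hb := by
        rintro ⟨h₀, hh₀, heq⟩
        apply hAcase
        have : h₀⁻¹ * a ∈ N := by
          apply hmemN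
          rw [map_mul, map_inv, heq, inv_mul_cancel]
        have e2 : a = h₀ * (h₀⁻¹ * a) := by group
        rw [e2]
        exact Subgroup.mul_mem _ (Subgroup.mem_sup_left hh₀) (Subgroup.mem_sup_right this)
      have h1 : e ((π a)⁻¹ * π a) = 1 := by
        rw [inv_mul_cancel, he]
        simp [Hb.one_mem]
      have h0 : e ((π a)⁻¹) = 0 := by
        rw [he]
        have : (π a)⁻¹ ∉ Hb := fun hmem => hπa (by simpa using Hb.inv_mem hmem)
        simp [this]
      rw [hδ] at hone
      simp only [h1, h0, sub_zero, zpow_one] at hone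
      exact hb hone
end
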